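/- In the setting of a (P2+P3, complement-of-(P2+P3))-free graph G with induced 5-cycle C on v1,...,v5, for every i in {1,...,5} the edges between V_{i,i+2} and V_emptyset form a matching: every vertex of V_{i,i+2} has at most one neighbour in V_emptyset, and every vertex of V_emptyset has at most one neighbour in V_{i,i+2}. -/

import Mathlib

/-- `G` contains no induced subgraph isomorphic to `H`. -/
def InducedFree {α V : Type*} (G : SimpleGraph V) (H : SimpleGraph α) : Prop :=
  ∀ f : α ↪ V, ¬ (∀ a b : α, H.Adj a b ↔ G.Adj (f a) (f b))

/-- `P₂ + P₃`: the disjoint union of a 2-vertex path and a 3-vertex path. -/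
def P2PlusP3 : SimpleGraph (Fin 5) :=
  SimpleGraph.fromRel fun a b => (a = 0 ∧ b = 1) ∨ (a = 2 ∧ b = 3) ∨ (a = 3 ∧ b = 4)

/-- `VS G v S`: the vertices outside the 5-cycle `v 0, …, v 4` whose
neighbourhood on the cycle is exactly `{v i : i ∈ S}`. -/
def VS {V : Type*} (G : SimpleGraph V) (v : ZMod 5 → V) (S : Set (ZMod 5)) : Set V :=
  {x | (∀ i, x ≠ v i) ∧ ∀ i, G.Adj x (v i) ↔ i ∈ S}

/-
Both `V_∅` and `V_{i,i+2}` are stable sets: an edge inside `V_∅` together with the path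
`v₀ v₁ v₂` induces `P₂ + P₃`, and an edge `x x'` inside `V_{i,i+2}` yields, in the complement,
the edge `vᵢ v_{i+2}` and the induced path `x v_{i+1} x'`. So two neighbours of one vertex on
the other side form an induced `P₃`, and the cycle edge `v_{i+3} v_{i+4}`, which has no
neighbour in either set, completes it to an induced `P₂ + P₃`.
-/

section

variable {V : Type*}

def IsInducedC5 (G : SimpleGraph V) (v : ZMod 5 → V) : Prop :=
  ∀ i j : ZMod 5, G.Adj (v i) (v j) ↔ j = i + 1 ∨ j = i - 1

variable {G : SimpleGraph V}

theorem InducedFree.eq_or_adj_of_adj_of_adj (hG : InducedFree G P2PlusP3) {a b c d e : V}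
    (hab : G.Adj a b) (hdc : G.Adj d c) (hde : G.Adj d e)
    (hc : ¬ G.Adj a c ∧ ¬ G.Adj b c) (hd : ¬ G.Adj a d ∧ ¬ G.Adj b d)
    (he : ¬ G.Adj a e ∧ ¬ G.Adj b e) : c = e ∨ G.Adj c e := by
  by_contra! ⟨hce, hnce⟩
  have hinj : Function.Injective ![a, b, c, d, e] := by
    intro i j hij
    fin_cases i <;> fin_cases j <;> simp_all [G.adj_comm]
  refine hG ⟨_, hinj⟩ fun i j => ?_
  fin_cases i <;> fin_cases j <;> simp_all [P2PlusP3, G.adj_comm]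

namespace IsInducedC5

variable {v : ZMod 5 → V}

theorem adj_add_one (hC : IsInducedC5 G v) (j : ZMod 5) : G.Adj (v j) (v (j + 1)) :=
  (hC _ _).2 (Or.inl rfl)

theorem not_adj_add_two (hC : IsInducedC5 G v) (j : ZMod 5) : ¬ G.Adj (v j) (v (j + 2)) := by
  rw [hC]; revert j; decide

theorem ne_add_two (hC : IsInducedC5 G v) (j : ZMod 5) : v j ≠ v (j + 2) := by
  intro h
  have hadj : G.Adj (v (j + 4)) (v j) := (hC _ _).2 (by clear h; revert j; decide)
  have hnadj : ¬ G.Adj (v (j + 4)) (v (j + 2)) := by rw [hC]; clear h hadj; revert j; decide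
  exact hnadj (h ▸ hadj)

end IsInducedC5

variable {v : ZMod 5 → V} {S T : Set (ZMod 5)} {x y z : V}

theorem adj_of_mem_VS (hx : x ∈ VS G v S) {j : ZMod 5} (hj : j ∈ S) : G.Adj (v j) x :=
  ((hx.2 j).2 hj).symm

theorem not_adj_of_mem_VS (hx : x ∈ VS G v S) {j : ZMod 5} (hj : j ∉ S) : ¬ G.Adj (v j) x :=
  fun h => hj ((hx.2 j).1 h.symm)

theorem not_adj_of_mem_VS_empty (hG : InducedFree G P2PlusP3) (hC : IsInducedC5 G v)
    (hx : x ∈ VS G v ∅) (hy : y ∈ VS G v ∅) : ¬ G.Adj x y := by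
  intro hxy
  have hfar : ∀ j, ¬ G.Adj x (v j) ∧ ¬ G.Adj y (v j) := fun j =>
    ⟨fun h => not_adj_of_mem_VS hx (Set.notMem_empty j) h.symm,
      fun h => not_adj_of_mem_VS hy (Set.notMem_empty j) h.symm⟩
  rcases hG.eq_or_adj_of_adj_of_adj hxy (hC.adj_add_one 0).symm (hC.adj_add_one 1)
    (hfar 0) (hfar 1) (hfar 2) with h | h
  · exact hC.ne_add_two 0 h
  · exact hC.not_adj_add_two 0 h

theorem not_adj_of_mem_VS_pair (hGc : InducedFree Gᶜ P2PlusP3) (hC : IsInducedC5 G v)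
    {i : ZMod 5} (hx : x ∈ VS G v {i, i + 2}) (hy : y ∈ VS G v {i, i + 2}) : ¬ G.Adj x y := by
  intro hxy
  have hi : i ∈ ({i, i + 2} : Set (ZMod 5)) := by simp
  have hi2 : i + 2 ∈ ({i, i + 2} : Set (ZMod 5)) := by simp
  have hi1 : i + 1 ∉ ({i, i + 2} : Set (ZMod 5)) := by
    simp only [Set.mem_insert_iff, add_eq_left, Set.mem_singleton_iff, add_right_inj, not_or]
    decide
  have h21 : G.Adj (v (i + 2)) (v (i + 1)) := by
    simpa [add_assoc, one_add_one_eq_two] using (hC.adj_add_one (i + 1)).symm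
  rcases hGc.eq_or_adj_of_adj_of_adj (a := v i) (b := v (i + 2)) (d := v (i + 1))
    ⟨hC.ne_add_two i, hC.not_adj_add_two i⟩
    ⟨(hx.1 _).symm, not_adj_of_mem_VS hx hi1⟩ ⟨(hy.1 _).symm, not_adj_of_mem_VS hy hi1⟩
    ⟨fun h => h.2 (adj_of_mem_VS hx hi), fun h => h.2 (adj_of_mem_VS hx hi2)⟩
    ⟨fun h => h.2 (hC.adj_add_one i), fun h => h.2 h21⟩
    ⟨fun h => h.2 (adj_of_mem_VS hy hi), fun h => h.2 (adj_of_mem_VS hy hi2)⟩ with h | h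
  · exact hxy.ne h
  · exact h.2 hxy

theorem eq_of_adj_of_adj_of_mem_VS (hG : InducedFree G P2PlusP3) (hC : IsInducedC5 G v)
    {j : ZMod 5} (hS : j ∉ S ∧ j + 1 ∉ S) (hT : j ∉ T ∧ j + 1 ∉ T)
    (hx : x ∈ VS G v S) (hy : y ∈ VS G v T) (hz : z ∈ VS G v T)
    (hxy : G.Adj x y) (hxz : G.Adj x z) (hyz : ¬ G.Adj y z) : y = z :=
  (hG.eq_or_adj_of_adj_of_adj (hC.adj_add_one j) hxy hxz
    ⟨not_adj_of_mem_VS hy hT.1, not_adj_of_mem_VS hy hT.2⟩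
    ⟨not_adj_of_mem_VS hx hS.1, not_adj_of_mem_VS hx hS.2⟩
    ⟨not_adj_of_mem_VS hz hT.1, not_adj_of_mem_VS hz hT.2⟩).resolve_right hyz

theorem add_three_notMem_pair (i : ZMod 5) :
    i + 3 ∉ ({i, i + 2} : Set (ZMod 5)) ∧ i + 3 + 1 ∉ ({i, i + 2} : Set (ZMod 5)) := by
  simp only [Set.mem_insert_iff, Set.mem_singleton_iff]; revert i; decide

end

theorem stmt_16_general {V : Type*} (G : SimpleGraph V)
    (hG : InducedFree G P2PlusP3) (hGc : InducedFree Gᶜ P2PlusP3)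
    (v : ZMod 5 → V)
    (hC : ∀ i j : ZMod 5, G.Adj (v i) (v j) ↔ j = i + 1 ∨ j = i - 1) :
    ∀ i : ZMod 5,
      (∀ x ∈ VS G v {i, i + 2}, ∀ y ∈ VS G v (∅ : Set (ZMod 5)),
        ∀ y' ∈ VS G v (∅ : Set (ZMod 5)), G.Adj x y → G.Adj x y' → y = y') ∧
      (∀ y ∈ VS G v (∅ : Set (ZMod 5)), ∀ x ∈ VS G v {i, i + 2},
        ∀ x' ∈ VS G v {i, i + 2}, G.Adj y x → G.Adj y x' → x = x') := by
  intro i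
  have hempty : i + 3 ∉ (∅ : Set (ZMod 5)) ∧ i + 3 + 1 ∉ (∅ : Set (ZMod 5)) :=
    ⟨Set.notMem_empty _, Set.notMem_empty _⟩
  refine ⟨fun x hx y hy y' hy' hxy hxy' => ?_, fun y hy x hx x' hx' hyx hyx' => ?_⟩
  · exact eq_of_adj_of_adj_of_mem_VS hG hC (add_three_notMem_pair i) hempty hx hy hy' hxy hxy'
      (not_adj_of_mem_VS_empty hG hC hy hy')
  · exact eq_of_adj_of_adj_of_mem_VS hG hC hempty (add_three_notMem_pair i) hy hx hx' hyx hyx'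
      (not_adj_of_mem_VS_pair hGc hC hx hx')

/-- For each `i`, the edges between `V_{i,i+2}` and `V_∅` form a matching:
each vertex of one set has at most one neighbour in the other. -/
theorem stmt_16 {V : Type*} [Fintype V] (G : SimpleGraph V)
    (hG : InducedFree G P2PlusP3) (hGc : InducedFree Gᶜ P2PlusP3)
    (v : ZMod 5 → V) (hv : Function.Injective v)
    (hC : ∀ i j : ZMod 5, G.Adj (v i) (v j) ↔ j = i + 1 ∨ j = i - 1) :
    ∀ i : ZMod 5,
      (∀ x ∈ VS G v {i, i + 2}, ∀ y ∈ VS G v (∅ : Set (ZMod 5)),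
        ∀ y' ∈ VS G v (∅ : Set (ZMod 5)), G.Adj x y → G.Adj x y' → y = y') ∧
      (∀ y ∈ VS G v (∅ : Set (ZMod 5)), ∀ x ∈ VS G v {i, i + 2},
        ∀ x' ∈ VS G v {i, i + 2}, G.Adj y x → G.Adj y x' → x = x') :=
  stmt_16_general G hG hGc v hC
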